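/- Completeness of Equivalence Checking: for all programs P, Q of the language L and symbolic contexts G, R over 𝕍, if (X_∅, G, R, P) ↪↓ (G_P, R_P), (X_∅, G, R, Q) ↪↓ (G_Q, R_Q), and the symbolic outputs differ (G_P ≠ G_Q or R_P ≠ R_Q), then, assuming that for all distinct a, b ∈ 𝕍 there is a map φ : (𝕍, ⊕) → (ℝ, ⊕) with φ(a) ≠ φ(b), there exists a map φ : (𝕍, ⊕) → (ℝ, ⊕) such that whenever (φ(G), φ(R), P) ↓ (G_P', R_P') and (φ(G), φ(R), Q) ↓ (G_Q', R_Q'), one has G_P' ≠ G_Q' or R_P' ≠ R_Q'. -/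

import Mathlib

namespace Volta

/-- Statements of the language `L` of structured-CTAs.  Constants are drawn
from a type `C`, registers from `Reg`, shared-memory addresses from `Addr`,
and thread IDs from `TID`. -/
inductive Stmt (C Reg Addr TID : Type) : Type where
  | const (r : Reg) (c : C)
  | binop (r r₁ r₂ : Reg)
  | copy (r r' : Reg)
  | read (r : Reg) (g : Addr)
  | write (g : Addr) (r : Reg)
  | sync (I : Set TID)

/-- A thread program: a finite sequence of statements ending in `return`. -/
inductive ThreadProg (C Reg Addr TID : Type) : Type where
  | ret
  | seq (s : Stmt C Reg Addr TID) (T : ThreadProg C Reg Addr TID)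

/-- A configuration: shared memory `G`, register files `R`, program `P`. -/
structure Config (Val C Reg Addr TID : Type) : Type where
  G : Addr → Val
  R : TID → Reg → Val
  P : TID → ThreadProg C Reg Addr TID

/-- Memory-event contexts: for each address, per reader the set of threads
that have not synchronized with that read, and the last writer together with
the set of threads that have not synchronized with that write. -/
abbrev MemEvs (Addr TID : Type) : Type :=
  Addr → (TID → Set TID) × (TID × Set TID)

variable {Val C Reg Addr TID : Type}

/-- Thread `i` has synchronized with all readers as required. -/
def noRacingRd (i : TID) (rd : TID → Set TID) : Prop :=
  ∀ j, i = j ∨ i ∉ rd j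

/-- Thread `i` is, or has synchronized with, the last writer as required. -/
def noRacingWr (i : TID) (wr : TID × Set TID) : Prop :=
  i = wr.1 ∨ i ∉ wr.2

open Classical in
/-- `sync I` removes `I` from the recorded unsynchronized sets belonging to
threads of `I`. -/
noncomputable def syncMem (I : Set TID) (X : MemEvs Addr TID) : MemEvs Addr TID :=
  fun g =>
    (fun i => if i ∈ I then (X g).1 i \ I else (X g).1 i,
     if (X g).2.1 ∈ I then ((X g).2.1, (X g).2.2 \ I) else (X g).2)

/-- The initial memory-event context `X_∅`, whose recorded unsynchronized sets
are all empty (the choice of the recorded "last writer" `t₀` is arbitrary). -/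
def emptyMemEvs (t₀ : TID) : MemEvs Addr TID :=
  fun _ => (fun _ => (∅ : Set TID), (t₀, (∅ : Set TID)))

section Dynamics

variable [DecidableEq Reg] [DecidableEq Addr] [DecidableEq TID]
variable (op : Val → Val → Val) (κ : C → Val)

/-- Thread-level unchecked small-step relation. -/
inductive TStep :
    (Addr → Val) → (Reg → Val) → ThreadProg C Reg Addr TID →
    (Addr → Val) → (Reg → Val) → ThreadProg C Reg Addr TID → Prop where
  | const {G : Addr → Val} {R : Reg → Val} {r : Reg} {c : C} {T} :
      TStep G R (.seq (.const r c) T) G (Function.update R r (κ c)) T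
  | binop {G : Addr → Val} {R : Reg → Val} {r r₁ r₂ : Reg} {T} :
      TStep G R (.seq (.binop r r₁ r₂) T) G (Function.update R r (op (R r₁) (R r₂))) T
  | copy {G : Addr → Val} {R : Reg → Val} {r r' : Reg} {T} :
      TStep G R (.seq (.copy r r') T) G (Function.update R r (R r')) T
  | read {G : Addr → Val} {R : Reg → Val} {r : Reg} {g : Addr} {T} :
      TStep G R (.seq (.read r g) T) G (Function.update R r (G g)) T
  | write {G : Addr → Val} {R : Reg → Val} {g : Addr} {r : Reg} {T} :
      TStep G R (.seq (.write g r) T) (Function.update G g (R r)) R T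

/-- Top-level unchecked small-step relation `→`:
rule `Schd` advances any single thread not blocked at a `sync`, and rule
`Sync`, when every thread of `I` is either at `sync I` or at `return`,
simultaneously advances all threads of `I` past their `sync`. -/
inductive Step : Config Val C Reg Addr TID → Config Val C Reg Addr TID → Prop where
  | schd {c : Config Val C Reg Addr TID} {i : TID} {G' : Addr → Val}
      {R' : Reg → Val} {T' : ThreadProg C Reg Addr TID} :
      TStep op κ c.G (c.R i) (c.P i) G' R' T' →
      Step c ⟨G', Function.update c.R i R', Function.update c.P i T'⟩
  | sync {c : Config Val C Reg Addr TID} {I : Set TID}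
      {P' : TID → ThreadProg C Reg Addr TID} :
      (∀ i ∉ I, P' i = c.P i) →
      (∀ i ∈ I, (c.P i = .ret ∧ P' i = .ret) ∨
        ∃ T, c.P i = .seq (.sync I) T ∧ P' i = T) →
      Step c ⟨c.G, c.R, P'⟩

/-- `→*`: reflexive-transitive closure of the unchecked step relation. -/
def Steps : Config Val C Reg Addr TID → Config Val C Reg Addr TID → Prop :=
  Relation.ReflTransGen (Step op κ)

/-- Result of a checked thread-level step: a new configuration or the error `⊥`. -/
inductive CTRes (Val C Reg Addr TID : Type) : Type where
  | ok (X : MemEvs Addr TID) (G : Addr → Val) (R : Reg → Val)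
      (T : ThreadProg C Reg Addr TID)
  | err

/-- Thread-level checked small-step relation `↪ᵢ`: a read by thread `i`
updates the reader entry of `i` to the set of all TIDs and requires
`noRacingWr`; a write by `i` requires both `noRacingRd` and `noRacingWr` and
sets the writer record to `(i, univ)`; a read or write whose side condition
fails steps to the error `⊥`. -/
inductive CTStep (i : TID) :
    MemEvs Addr TID → (Addr → Val) → (Reg → Val) → ThreadProg C Reg Addr TID →
    CTRes Val C Reg Addr TID → Prop where
  | const {X : MemEvs Addr TID} {G : Addr → Val} {R : Reg → Val} {r : Reg} {c : C} {T} :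
      CTStep i X G R (.seq (.const r c) T) (.ok X G (Function.update R r (κ c)) T)
  | binop {X : MemEvs Addr TID} {G : Addr → Val} {R : Reg → Val} {r r₁ r₂ : Reg} {T} :
      CTStep i X G R (.seq (.binop r r₁ r₂) T)
        (.ok X G (Function.update R r (op (R r₁) (R r₂))) T)
  | copy {X : MemEvs Addr TID} {G : Addr → Val} {R : Reg → Val} {r r' : Reg} {T} :
      CTStep i X G R (.seq (.copy r r') T) (.ok X G (Function.update R r (R r')) T)
  | read {X : MemEvs Addr TID} {G : Addr → Val} {R : Reg → Val} {r : Reg} {g : Addr} {T}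
      (hw : noRacingWr i (X g).2) :
      CTStep i X G R (.seq (.read r g) T)
        (.ok (Function.update X g (Function.update (X g).1 i (Set.univ : Set TID), (X g).2))
          G (Function.update R r (G g)) T)
  | write {X : MemEvs Addr TID} {G : Addr → Val} {R : Reg → Val} {g : Addr} {r : Reg} {T}
      (hr : noRacingRd i (X g).1) (hw : noRacingWr i (X g).2) :
      CTStep i X G R (.seq (.write g r) T)
        (.ok (Function.update X g ((X g).1, (i, (Set.univ : Set TID))))
          (Function.update G g (R r)) R T)
  | readBad {X : MemEvs Addr TID} {G : Addr → Val} {R : Reg → Val} {r : Reg} {g : Addr} {T}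
      (hw : ¬ noRacingWr i (X g).2) :
      CTStep i X G R (.seq (.read r g) T) .err
  | writeBad {X : MemEvs Addr TID} {G : Addr → Val} {R : Reg → Val} {g : Addr} {r : Reg} {T}
      (hbad : ¬ noRacingRd i (X g).1 ∨ ¬ noRacingWr i (X g).2) :
      CTStep i X G R (.seq (.write g r) T) .err

/-- A checked configuration: a tuple `(X, G, R, P)` or the error `⊥`. -/
inductive CConfig (Val C Reg Addr TID : Type) : Type where
  | ok (X : MemEvs Addr TID) (c : Config Val C Reg Addr TID)
  | err

/-- Top-level checked small-step relation `↪`. -/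
inductive CStep : CConfig Val C Reg Addr TID → CConfig Val C Reg Addr TID → Prop where
  | schd {X : MemEvs Addr TID} {c : Config Val C Reg Addr TID} {i : TID}
      {X' : MemEvs Addr TID} {G' : Addr → Val} {R' : Reg → Val}
      {T' : ThreadProg C Reg Addr TID} :
      CTStep op κ i X c.G (c.R i) (c.P i) (.ok X' G' R' T') →
      CStep (.ok X c) (.ok X' ⟨G', Function.update c.R i R', Function.update c.P i T'⟩)
  | schdBad {X : MemEvs Addr TID} {c : Config Val C Reg Addr TID} {i : TID} :
      CTStep op κ i X c.G (c.R i) (c.P i) .err →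
      CStep (.ok X c) .err
  | sync {X : MemEvs Addr TID} {c : Config Val C Reg Addr TID} {I : Set TID}
      {P' : TID → ThreadProg C Reg Addr TID} :
      (∀ i ∉ I, P' i = c.P i) →
      (∀ i ∈ I, (c.P i = .ret ∧ P' i = .ret) ∨
        ∃ T, c.P i = .seq (.sync I) T ∧ P' i = T) →
      CStep (.ok X c) (.ok (syncMem I X) ⟨c.G, c.R, P'⟩)

/-- `↪*`: reflexive-transitive closure of the checked step relation. -/
def CSteps : CConfig Val C Reg Addr TID → CConfig Val C Reg Addr TID → Prop :=
  Relation.ReflTransGen (CStep op κ)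

/-- A memory access (an unchecked `Schd` step that is a read (`w = false`)
or write (`w = true`) by thread `i` to address `g`). -/
inductive AccStep (i : TID) (g : Addr) :
    Bool → Config Val C Reg Addr TID → Config Val C Reg Addr TID → Prop where
  | read {c : Config Val C Reg Addr TID} {r : Reg} {T : ThreadProg C Reg Addr TID}
      (h : c.P i = .seq (.read r g) T) :
      AccStep i g false c
        ⟨c.G, Function.update c.R i (Function.update (c.R i) r (c.G g)),
          Function.update c.P i T⟩
  | write {c : Config Val C Reg Addr TID} {r : Reg} {T : ThreadProg C Reg Addr TID}
      (h : c.P i = .seq (.write g r) T) :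
      AccStep i g true c
        ⟨Function.update c.G g (c.R i r), c.R, Function.update c.P i T⟩

/-- `P` has a data race: there are two memory accesses by distinct threads to
the same address, at least one a write, and two unchecked traces with a common
prefix after which the first access immediately precedes the second in one
trace and vice versa in the other. -/
def HasDataRace (P : TID → ThreadProg C Reg Addr TID) : Prop :=
  ∃ (G₀ : Addr → Val) (R₀ : TID → Reg → Val)
    (c c₁ c₁' c₂ c₂' : Config Val C Reg Addr TID)
    (i j : TID) (g : Addr) (wi wj : Bool),
    i ≠ j ∧ (wi = true ∨ wj = true) ∧
    Steps op κ ⟨G₀, R₀, P⟩ c ∧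
    AccStep i g wi c c₁ ∧ AccStep j g wj c₁ c₁' ∧
    AccStep j g wj c c₂ ∧ AccStep i g wi c₂ c₂'

/-- `(G, R, P) ↓ (G', R')`: the unchecked dynamics reaches a configuration
with every thread at `return`, with final shared memory `G'` and registers `R'`. -/
def Terminates (c : Config Val C Reg Addr TID)
    (G' : Addr → Val) (R' : TID → Reg → Val) : Prop :=
  ∃ P', Steps op κ c ⟨G', R', P'⟩ ∧ ∀ i, P' i = ThreadProg.ret

/-- `(X, G, R, P) ↪↓ (G', R')`: the checked dynamics reaches a configuration
with every thread at `return`, with final shared memory `G'` and registers `R'`. -/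
def CTerminates (X : MemEvs Addr TID) (c : Config Val C Reg Addr TID)
    (G' : Addr → Val) (R' : TID → Reg → Val) : Prop :=
  ∃ X' P', CSteps op κ (.ok X c) (.ok X' ⟨G', R', P'⟩) ∧ ∀ i, P' i = ThreadProg.ret

end Dynamics

end Volta

namespace Volta


/-!
A checked run that reaches `return` everywhere certifies that no thread ever performs a racing
access: the unsynchronized sets only grow under other threads' accesses, and a barrier that could
shrink them cannot fire while the thread waits at its access. For race-free threads any two
enabled steps commute, so every step taken off such a run leads to a configuration that still
reaches the same final state. Every unchecked step can be taken by the checked semantics along the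
way, hence every unchecked terminating run ends in that state. A homomorphism `φ` maps checked
runs to checked runs, so over `ℝ` the programs `P` and `Q` can only terminate in the images
under `φ` of their symbolic outputs, which differ once `φ` separates two differing entries.
-/

section MemEvs

variable {C Reg Addr TID : Type} {X : MemEvs Addr TID} {g h : Addr} {i j : TID} {I J : Set TID}

theorem syncMem_comm (I J : Set TID) (X : MemEvs Addr TID) :
    syncMem I (syncMem J X) = syncMem J (syncMem I X) := by
  funext g
  refine Prod.ext (funext fun k => ?_) ?_ <;> simp only [syncMem]
  · by_cases hI : k ∈ I <;> by_cases hJ : k ∈ J <;> simp [hI, hJ, Set.sdiff_sdiff, Set.union_comm]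
  · by_cases hI : (X g).2.1 ∈ I <;> by_cases hJ : (X g).2.1 ∈ J <;>
      simp [hI, hJ, Set.sdiff_sdiff, Set.union_comm]

theorem noRacingRd_syncMem (hi : i ∉ I) :
    noRacingRd i (syncMem I X g).1 ↔ noRacingRd i (X g).1 := by
  simp only [noRacingRd, syncMem]
  refine forall_congr' fun k => ?_
  split_ifs <;> simp [hi]

theorem noRacingWr_syncMem (hi : i ∉ I) :
    noRacingWr i (syncMem I X g).2 ↔ noRacingWr i (X g).2 := by
  simp only [noRacingWr, syncMem]
  split_ifs <;> simp [hi]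

/-- Thread `i` about to run `T` would step to `⊥` in the memory-event context `X`. -/
def Racy (X : MemEvs Addr TID) (i : TID) : ThreadProg C Reg Addr TID → Prop
  | .seq (.read _ g) _ => ¬ noRacingWr i (X g).2
  | .seq (.write g _) _ => ¬ (noRacingRd i (X g).1 ∧ noRacingWr i (X g).2)
  | _ => False

theorem racy_syncMem_iff (hi : i ∉ I) {T : ThreadProg C Reg Addr TID} :
    Racy (syncMem I X) i T ↔ Racy X i T := by
  rcases T with _ | ⟨_ | _ | _ | _ | _ | _, _⟩ <;>
    simp only [Racy, noRacingRd_syncMem hi, noRacingWr_syncMem hi]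

section DecidableEqAddr

variable [DecidableEq Addr]

def recordWrite (X : MemEvs Addr TID) (g : Addr) (i : TID) : MemEvs Addr TID :=
  Function.update X g ((X g).1, (i, Set.univ))

theorem recordWrite_apply_of_ne (hgh : g ≠ h) : recordWrite X h j g = X g :=
  Function.update_of_ne hgh _ _

theorem recordWrite_comm (hgh : g ≠ h) (X : MemEvs Addr TID) (i j : TID) :
    recordWrite (recordWrite X h j) g i = recordWrite (recordWrite X g i) h j := by
  simp [recordWrite, Function.update_comm hgh, Function.update_of_ne hgh,
    Function.update_of_ne (Ne.symm hgh)]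

theorem syncMem_recordWrite (hi : i ∉ I) (X : MemEvs Addr TID) (g : Addr) :
    syncMem I (recordWrite X g i) = recordWrite (syncMem I X) g i := by
  classical
  funext a
  by_cases ha : a = g
  · subst ha; simp [syncMem, recordWrite, hi]
  · simp [syncMem, recordWrite, ha]

theorem Racy.recordWrite (hij : i ≠ j) {T : ThreadProg C Reg Addr TID} (hT : Racy X i T) :
    Racy (recordWrite X h j) i T := by
  rcases T with _ | ⟨_ | _ | _ | ⟨_, g⟩ | ⟨g, _⟩ | _, _⟩ <;> try exact hT
  all_goals
    by_cases hgh : g = h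
    · subst hgh; simp [Racy, Volta.recordWrite, noRacingWr, hij]
    · simpa only [Racy, recordWrite_apply_of_ne hgh] using hT

section DecidableEqTID

variable [DecidableEq TID]

def recordRead (X : MemEvs Addr TID) (g : Addr) (i : TID) : MemEvs Addr TID :=
  Function.update X g (Function.update (X g).1 i Set.univ, (X g).2)

theorem recordRead_apply_of_ne (hgh : g ≠ h) : recordRead X h j g = X g :=
  Function.update_of_ne hgh _ _

theorem recordRead_snd (X : MemEvs Addr TID) (g h : Addr) (j : TID) :
    (recordRead X h j g).2 = (X g).2 := by
  by_cases hgh : g = h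
  · subst hgh; simp [recordRead]
  · rw [recordRead_apply_of_ne hgh]

theorem recordRead_comm (hij : i ≠ j) (X : MemEvs Addr TID) (g h : Addr) :
    recordRead (recordRead X h j) g i = recordRead (recordRead X g i) h j := by
  by_cases hgh : g = h
  · subst hgh
    simp [recordRead, Function.update_comm hij]
  · simp [recordRead, Function.update_comm hgh, Function.update_of_ne hgh,
      Function.update_of_ne (Ne.symm hgh)]

theorem recordRead_recordWrite_comm (hgh : g ≠ h) (X : MemEvs Addr TID) (i j : TID) :
    recordRead (recordWrite X h j) g i = recordWrite (recordRead X g i) h j := by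
  simp [recordRead, Volta.recordWrite, Function.update_comm hgh, Function.update_of_ne hgh,
    Function.update_of_ne (Ne.symm hgh)]

theorem syncMem_recordRead (hi : i ∉ I) (X : MemEvs Addr TID) (g : Addr) :
    syncMem I (recordRead X g i) = recordRead (syncMem I X) g i := by
  classical
  funext a
  by_cases ha : a = g
  · subst ha
    refine Prod.ext (funext fun k => ?_) ?_
    · by_cases hk : k = i
      · subst hk; simp [syncMem, recordRead, hi]
      · simp [syncMem, recordRead, hk]
    · simp [syncMem, recordRead]
  · simp [syncMem, recordRead, ha]

theorem Racy.recordRead (hij : i ≠ j) {T : ThreadProg C Reg Addr TID} (hT : Racy X i T) :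
    Racy (recordRead X h j) i T := by
  rcases T with _ | ⟨_ | _ | _ | ⟨_, g⟩ | ⟨g, _⟩ | _, _⟩ <;> try exact hT
  · simpa only [Racy, recordRead_snd] using hT
  · by_cases hgh : g = h
    · subst hgh
      exact fun hsafe => (hsafe.1 j).elim hij (by simp [Volta.recordRead])
    · simpa only [Racy, recordRead_apply_of_ne hgh] using hT

end DecidableEqTID

end DecidableEqAddr

end MemEvs

section Sync

variable {C Reg Addr TID : Type} {I J : Set TID} {P P₁ P₂ : TID → ThreadProg C Reg Addr TID}

def SyncStep (I : Set TID) (P P' : TID → ThreadProg C Reg Addr TID) : Prop :=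
  (∀ i ∉ I, P' i = P i) ∧
    ∀ i ∈ I, (P i = .ret ∧ P' i = .ret) ∨ ∃ T, P i = .seq (.sync I) T ∧ P' i = T

theorem SyncStep.unique (h₁ : SyncStep I P P₁) (h₂ : SyncStep I P P₂) : P₁ = P₂ := by
  funext k
  by_cases hk : k ∈ I
  · rcases h₁.2 k hk with ⟨h, e₁⟩ | ⟨T, h, e₁⟩ <;> rcases h₂.2 k hk with ⟨h', e₂⟩ | ⟨T', h', e₂⟩ <;>
      simp_all
  · rw [h₁.1 k hk, h₂.1 k hk]

theorem SyncStep.eq_of_forall_ret (h : SyncStep I P P₁) (hP : ∀ i, P i = .ret) : P₁ = P :=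
  h.unique ⟨fun _ _ => rfl, fun i _ => .inl ⟨hP i, hP i⟩⟩

theorem SyncStep.update [DecidableEq TID] {i : TID} {T : ThreadProg C Reg Addr TID}
    (hi : i ∉ I) (h : SyncStep I P P₁) :
    SyncStep I (Function.update P i T) (Function.update P₁ i T) := by
  refine ⟨fun k hk => ?_, fun k hk => ?_⟩
  · by_cases hki : k = i
    · subst hki; simp
    · simp [Function.update_of_ne hki, h.1 k hk]
  · have hki : k ≠ i := fun e => hi (e ▸ hk)
    simpa [Function.update_of_ne hki] using h.2 k hk

theorem SyncStep.comm (hIJ : I ≠ J) (hI : SyncStep I P P₁) (hJ : SyncStep J P P₂) :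
    ∃ P₃, SyncStep J P₁ P₃ ∧ SyncStep I P₂ P₃ := by
  classical
  -- a thread waits at no more than one barrier, so the threads of `I ∩ J` have returned
  have hret : ∀ k ∈ I, k ∈ J → P₁ k = .ret ∧ P₂ k = .ret := by
    intro k hkI hkJ
    rcases hI.2 k hkI with ⟨h, e₁⟩ | ⟨T, h, e₁⟩ <;> rcases hJ.2 k hkJ with ⟨h', e₂⟩ | ⟨T', h', e₂⟩ <;>
      simp_all
  refine ⟨fun k => if k ∈ I then P₁ k else P₂ k, ⟨fun k hk => ?_, fun k hk => ?_⟩,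
    ⟨fun k hk => ?_, fun k hk => ?_⟩⟩
  · dsimp only
    split_ifs with hkI
    · rfl
    · rw [hJ.1 k hk, hI.1 k hkI]
  · dsimp only
    split_ifs with hkI
    · exact .inl ⟨(hret k hkI hk).1, (hret k hkI hk).1⟩
    · rw [hI.1 k hkI]; exact hJ.2 k hk
  · simp [hk]
  · simp only [hk, if_true]
    by_cases hkJ : k ∈ J
    · exact .inl ⟨(hret k hk hkJ).2, (hret k hk hkJ).1⟩
    · rw [hJ.1 k hkJ]; exact hI.2 k hk

end Sync

section Dynamics

variable {Val C Reg Addr TID : Type} [DecidableEq Reg] [DecidableEq Addr] [DecidableEq TID]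
  {op : Val → Val → Val} {κ : C → Val}
  {X X' X₁ X₂ : MemEvs Addr TID} {G G' G₁ G₂ Gf : Addr → Val} {R R' R₁ R₂ : Reg → Val}
  {Rf : TID → Reg → Val} {T T' T₁ T₂ : ThreadProg C Reg Addr TID} {c c' : Config Val C Reg Addr TID}
  {i j : TID} {I : Set TID}

theorem CSteps.eq_err {s : CConfig Val C Reg Addr TID} (h : CSteps op κ .err s) : s = .err := by
  induction h with
  | refl => rfl
  | tail _ step ih => subst ih; cases step

theorem CTStep.unique {res₁ res₂ : CTRes Val C Reg Addr TID}
    (h₁ : CTStep op κ i X G R T res₁) (h₂ : CTStep op κ i X G R T res₂) : res₁ = res₂ := by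
  cases h₁ <;> cases h₂ <;> simp_all

theorem CTStep.not_racy (h : CTStep op κ i X G R T (.ok X' G' R' T')) : ¬ Racy X i T := by
  cases h <;> simp_all [Racy]

theorem CTStep.racy_of_ne {Ti : ThreadProg C Reg Addr TID} (hij : i ≠ j)
    (h : CTStep op κ j X G R T (.ok X' G' R' T')) (hi : Racy X i Ti) : Racy X' i Ti := by
  cases h
  · exact hi
  · exact hi
  · exact hi
  · exact hi.recordRead hij
  · exact hi.recordWrite hij

theorem CTStep.not_mem_of_syncStep {P P' : TID → ThreadProg C Reg Addr TID}
    {res : CTRes Val C Reg Addr TID} (h : CTStep op κ i X G R (P i) res) (hs : SyncStep I P P') :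
    i ∉ I := fun hi => by
  rcases hs.2 i hi with ⟨hP, -⟩ | ⟨T, hP, -⟩ <;> rw [hP] at h <;> cases h

theorem CTStep.syncMem (hi : i ∉ I) (h : CTStep op κ i X G R T (.ok X' G' R' T')) :
    CTStep op κ i (syncMem I X) G R T (.ok (syncMem I X') G' R' T') := by
  cases h with
  | const => exact .const
  | binop => exact .binop
  | copy => exact .copy
  | @read r g _ hw =>
    exact (syncMem_recordRead hi X g).symm ▸ .read ((noRacingWr_syncMem hi).2 hw)
  | @write g r _ hr hw =>
    exact (syncMem_recordWrite hi X g).symm ▸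
      .write ((noRacingRd_syncMem hi).2 hr) ((noRacingWr_syncMem hi).2 hw)

theorem CTStep.read' {r : Reg} {g : Addr} (hw : noRacingWr i (X g).2) :
    CTStep op κ i X G R (.seq (.read r g) T)
      (.ok (recordRead X g i) G (Function.update R r (G g)) T) :=
  .read hw

theorem CTStep.write' {r : Reg} {g : Addr} (hr : noRacingRd i (X g).1)
    (hw : noRacingWr i (X g).2) :
    CTStep op κ i X G R (.seq (.write g r) T)
      (.ok (recordWrite X g i) (Function.update G g (R r)) R T) :=
  .write hr hw

theorem CTStep.swap_read {Ri Rj Rj' : Reg → Val} {Ti Tj Tj' : ThreadProg C Reg Addr TID}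
    {r : Reg} {g : Addr} (hij : i ≠ j) (ctj : CTStep op κ j X G Rj Tj (.ok X₁ G₁ Rj' Tj'))
    (hw₁ : noRacingWr i (X₁ g).2) :
    ∃ X₃ G₃, CTStep op κ i X₁ G₁ Ri (.seq (.read r g) Ti)
        (.ok X₃ G₃ (Function.update Ri r (G g)) Ti) ∧
      CTStep op κ j (recordRead X g i) G Rj Tj (.ok X₃ G₃ Rj' Tj') := by
  cases ctj with
  | const => exact ⟨_, _, .read' hw₁, .const⟩
  | binop => exact ⟨_, _, .read' hw₁, .binop⟩
  | copy => exact ⟨_, _, .read' hw₁, .copy⟩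
  | @read r' h _ hw =>
    have stj := CTStep.read' (op := op) (κ := κ) (X := recordRead X g i) (G := G) (R := Rj) (r := r')
      (T := Tj') (by rwa [recordRead_snd])
    rw [← recordRead_comm hij] at stj
    exact ⟨_, _, .read' hw₁, stj⟩
  | @write h r' _ hr hw =>
    have hgh : g ≠ h := by
      rintro rfl
      simp [noRacingWr, hij] at hw₁
    have sti := CTStep.read' (op := op) (κ := κ) (G := Function.update G h (Rj r')) (R := Ri) (r := r)
      (T := Ti) hw₁
    have stj := CTStep.write' (op := op) (κ := κ) (X := recordRead X g i) (G := G) (R := Rj) (r := r')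
      (T := Tj') (by rwa [recordRead_apply_of_ne (Ne.symm hgh)]) (by rwa [recordRead_snd])
    rw [Function.update_of_ne hgh] at sti
    rw [← recordRead_recordWrite_comm hgh] at stj
    exact ⟨_, _, sti, stj⟩

theorem CTStep.swap_write {Ri Rj Rj' : Reg → Val} {Ti Tj Tj' : ThreadProg C Reg Addr TID}
    {r : Reg} {g : Addr} (hij : i ≠ j) (ctj : CTStep op κ j X G Rj Tj (.ok X₁ G₁ Rj' Tj'))
    (hrw₁ : noRacingRd i (X₁ g).1 ∧ noRacingWr i (X₁ g).2) :
    ∃ X₃ G₃, CTStep op κ i X₁ G₁ Ri (.seq (.write g r) Ti) (.ok X₃ G₃ Ri Ti) ∧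
      CTStep op κ j (recordWrite X g i) (Function.update G g (Ri r)) Rj Tj
        (.ok X₃ G₃ Rj' Tj') := by
  cases ctj with
  | const => exact ⟨_, _, .write' hrw₁.1 hrw₁.2, .const⟩
  | binop => exact ⟨_, _, .write' hrw₁.1 hrw₁.2, .binop⟩
  | copy => exact ⟨_, _, .write' hrw₁.1 hrw₁.2, .copy⟩
  | @read r' h _ hw =>
    have hgh : g ≠ h := by
      rintro rfl
      exact (hrw₁.1 j).elim hij (by simp)
    have stj := CTStep.read' (op := op) (κ := κ) (X := recordWrite X g i) (G := Function.update G g (Ri r))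
      (R := Rj) (r := r') (T := Tj') (by rwa [recordWrite_apply_of_ne (Ne.symm hgh)])
    rw [Function.update_of_ne (Ne.symm hgh), recordRead_recordWrite_comm (Ne.symm hgh)] at stj
    exact ⟨_, _, .write' hrw₁.1 hrw₁.2, stj⟩
  | @write h r' _ hr hw =>
    have hgh : g ≠ h := by
      rintro rfl
      simp [noRacingWr, hij] at hrw₁
    have stj := CTStep.write' (op := op) (κ := κ) (X := recordWrite X g i)
      (G := Function.update G g (Ri r)) (R := Rj) (r := r') (T := Tj')
      (by rwa [recordWrite_apply_of_ne (Ne.symm hgh)])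
      (by rwa [recordWrite_apply_of_ne (Ne.symm hgh)])
    rw [← recordWrite_comm hgh, Function.update_comm hgh] at stj
    exact ⟨_, _, .write' hrw₁.1 hrw₁.2, stj⟩

/-- `hsafe` excludes the only non-commuting pairs: accesses to one address, at least one of them
a write. -/
theorem CTStep.swap {Ri Rj Ri' Rj' : Reg → Val} {Ti Tj Ti' Tj' : ThreadProg C Reg Addr TID}
    (hij : i ≠ j) (ctj : CTStep op κ j X G Rj Tj (.ok X₁ G₁ Rj' Tj'))
    (cti : CTStep op κ i X G Ri Ti (.ok X₂ G₂ Ri' Ti')) (hsafe : ¬ Racy X₁ i Ti) :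
    ∃ X₃ G₃, CTStep op κ i X₁ G₁ Ri Ti (.ok X₃ G₃ Ri' Ti') ∧
      CTStep op κ j X₂ G₂ Rj Tj (.ok X₃ G₃ Rj' Tj') := by
  cases cti with
  | const => exact ⟨_, _, .const, ctj⟩
  | binop => exact ⟨_, _, .binop, ctj⟩
  | copy => exact ⟨_, _, .copy, ctj⟩
  | read => exact ctj.swap_read hij (not_not.mp hsafe)
  | write => exact ctj.swap_write hij (not_not.mp hsafe)

theorem CStep.schd_comm (hij : i ≠ j)
    (ctj : CTStep op κ j X c.G (c.R j) (c.P j) (.ok X₁ G₁ R₁ T₁))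
    (cti : CTStep op κ i X c.G (c.R i) (c.P i) (.ok X₂ G₂ R₂ T₂))
    (hsafe : ¬ Racy X₁ i (c.P i)) :
    ∃ X₃ c₃,
      CStep op κ (.ok X₁ ⟨G₁, Function.update c.R j R₁, Function.update c.P j T₁⟩) (.ok X₃ c₃) ∧
      CStep op κ (.ok X₂ ⟨G₂, Function.update c.R i R₂, Function.update c.P i T₂⟩) (.ok X₃ c₃) := by
  obtain ⟨X₃, G₃, sti, stj⟩ := ctj.swap hij cti hsafe
  refine ⟨X₃, ⟨G₃, Function.update (Function.update c.R j R₁) i R₂,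
    Function.update (Function.update c.P j T₁) i T₂⟩, .schd ?_, ?_⟩
  · simpa only [Function.update_of_ne hij] using sti
  · rw [Function.update_comm (Ne.symm hij), Function.update_comm (Ne.symm hij)]
    exact .schd (by simpa only [Function.update_of_ne (Ne.symm hij)] using stj)

theorem CStep.schd_sync_comm {P' : TID → ThreadProg C Reg Addr TID}
    (ct : CTStep op κ i X c.G (c.R i) (c.P i) (.ok X' G' R' T')) (hs : SyncStep I c.P P') :
    CStep op κ (.ok X' ⟨G', Function.update c.R i R', Function.update c.P i T'⟩)
        (.ok (syncMem I X') ⟨G', Function.update c.R i R', Function.update P' i T'⟩) ∧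
      CStep op κ (.ok (syncMem I X) ⟨c.G, c.R, P'⟩)
        (.ok (syncMem I X') ⟨G', Function.update c.R i R', Function.update P' i T'⟩) := by
  have hi := ct.not_mem_of_syncStep hs
  have hs' := hs.update (T := T') hi
  exact ⟨.sync hs'.1 hs'.2, .schd (by simpa only [hs.1 i hi] using ct.syncMem hi)⟩

theorem CStep.sync_comm {I J : Set TID} {P₁ P₂ : TID → ThreadProg C Reg Addr TID} (hIJ : I ≠ J)
    (hI : SyncStep I c.P P₁) (hJ : SyncStep J c.P P₂) :
    ∃ X₃ c₃, CStep op κ (.ok (syncMem I X) ⟨c.G, c.R, P₁⟩) (.ok X₃ c₃) ∧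
      CStep op κ (.ok (syncMem J X) ⟨c.G, c.R, P₂⟩) (.ok X₃ c₃) := by
  obtain ⟨P₃, h₁, h₂⟩ := hI.comm hIJ hJ
  exact ⟨_, ⟨c.G, c.R, P₃⟩, .sync h₁.1 h₁.2, syncMem_comm I J X ▸ .sync h₂.1 h₂.2⟩

theorem CStep.diamond {c₁ c₂ : Config Val C Reg Addr TID}
    (h₁ : CStep op κ (.ok X c) (.ok X₁ c₁)) (h₂ : CStep op κ (.ok X c) (.ok X₂ c₂))
    (hsafe : ∀ i, ¬ Racy X₁ i (c₁.P i)) :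
    (X₁ = X₂ ∧ c₁ = c₂) ∨
      ∃ X₃ c₃, CStep op κ (.ok X₁ c₁) (.ok X₃ c₃) ∧ CStep op κ (.ok X₂ c₂) (.ok X₃ c₃) := by
  cases h₁ with
  | @schd _ _ j _ _ _ _ ctj =>
    cases h₂ with
    | @schd _ _ i _ _ _ _ cti =>
      by_cases hij : i = j
      · subst hij
        cases ctj.unique cti
        exact .inl ⟨rfl, rfl⟩
      · refine .inr (CStep.schd_comm hij ctj cti ?_)
        simpa only [Function.update_of_ne hij] using hsafe i
    | sync hs₁ hs₂ =>
      obtain ⟨s₁, s₂⟩ := CStep.schd_sync_comm ctj ⟨hs₁, hs₂⟩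
      exact .inr ⟨_, _, s₁, s₂⟩
  | @sync _ _ I P₁ hs₁ hs₂ =>
    cases h₂ with
    | schd cti =>
      obtain ⟨s₁, s₂⟩ := CStep.schd_sync_comm cti ⟨hs₁, hs₂⟩
      exact .inr ⟨_, _, s₂, s₁⟩
    | @sync _ _ J P₂ hs₁' hs₂' =>
      by_cases hIJ : I = J
      · subst hIJ
        cases SyncStep.unique ⟨hs₁, hs₂⟩ ⟨hs₁', hs₂'⟩
        exact .inl ⟨rfl, rfl⟩
      · exact .inr (CStep.sync_comm hIJ ⟨hs₁, hs₂⟩ ⟨hs₁', hs₂'⟩)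

theorem CStep.eq_of_forall_ret {s : CConfig Val C Reg Addr TID} (hc : ∀ i, c.P i = .ret)
    (hs : CStep op κ (.ok X c) s) : ∃ X', s = .ok X' c := by
  cases hs with
  | @schd _ _ i _ _ _ _ ct => rw [hc i] at ct; cases ct
  | @schdBad _ _ i ct => rw [hc i] at ct; cases ct
  | sync hs₁ hs₂ => exact ⟨_, by rw [SyncStep.eq_of_forall_ret ⟨hs₁, hs₂⟩ hc]⟩

@[elab_as_elim]
theorem CTerminates.head_induction_on
    {motive : MemEvs Addr TID → Config Val C Reg Addr TID → Prop}
    (h : CTerminates op κ X c Gf Rf)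
    (final : ∀ X P, (∀ i, P i = .ret) → motive X ⟨Gf, Rf, P⟩)
    (head : ∀ X c X' c', CStep op κ (.ok X c) (.ok X' c') → CTerminates op κ X' c' Gf Rf →
      motive X' c' → motive X c) :
    motive X c := by
  obtain ⟨Xf, Pf, run, hfin⟩ := h
  generalize hs : CConfig.ok X c = s at run
  induction run using Relation.ReflTransGen.head_induction_on generalizing X c with
  | refl => cases hs; exact final Xf Pf hfin
  | @head s s₁ hd tl ih =>
    subst hs
    rcases s₁ with ⟨X₁, c₁⟩ | _
    · exact head X c X₁ c₁ hd ⟨Xf, Pf, tl, hfin⟩ (ih rfl)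
    · cases CSteps.eq_err tl

theorem CTerminates.not_racy (h : CTerminates op κ X c Gf Rf) (i : TID) :
    ¬ Racy X i (c.P i) := by
  refine h.head_induction_on (fun X P hP => by simp [hP i, Racy]) ?_
  intro X c X' c' hs _ ih
  cases hs with
  | @schd _ _ j _ _ _ _ ct =>
    by_cases hij : i = j
    · subst hij
      exact ct.not_racy
    · simp only [Function.update_of_ne hij] at ih
      exact fun hr => ih (ct.racy_of_ne hij hr)
  | @sync _ _ I P' hs₁ hs₂ =>
    by_cases hi : i ∈ I
    · rcases hs₂ i hi with ⟨hP, -⟩ | ⟨T, hP, -⟩ <;> simp [hP, Racy]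
    · simpa only [racy_syncMem_iff hi, hs₁ i hi] using ih

theorem CTerminates.eq_of_forall_ret (h : CTerminates op κ X c Gf Rf) (hc : ∀ i, c.P i = .ret) :
    c.G = Gf ∧ c.R = Rf := by
  refine h.head_induction_on (motive := fun X c => (∀ i, c.P i = .ret) → c.G = Gf ∧ c.R = Rf)
    (fun _ _ _ _ => ⟨rfl, rfl⟩) ?_ hc
  intro X c X' c' hs _ ih hc
  obtain ⟨_, he⟩ := hs.eq_of_forall_ret hc
  cases he
  exact ih hc

theorem CTerminates.of_cStep (h : CTerminates op κ X c Gf Rf)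
    (hs : CStep op κ (.ok X c) (.ok X' c')) : CTerminates op κ X' c' Gf Rf := by
  refine h.head_induction_on (motive := fun X c => ∀ X' c',
    CStep op κ (.ok X c) (.ok X' c') → CTerminates op κ X' c' Gf Rf) ?_ ?_ X' c' hs
  · intro X P hP X' c' hs
    obtain ⟨_, he⟩ := hs.eq_of_forall_ret hP
    cases he
    exact ⟨X', P, .refl, hP⟩
  · intro X c X₁ c₁ hs₁ h₁ ih X₂ c₂ hs₂
    rcases hs₁.diamond hs₂ h₁.not_racy with ⟨rfl, rfl⟩ | ⟨X₃, c₃, s₁₃, s₂₃⟩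
    · exact h₁
    · obtain ⟨Xf, Pf, run, hfin⟩ := ih _ _ s₁₃
      exact ⟨Xf, Pf, .head s₂₃ run, hfin⟩

theorem TStep.exists_ctStep (t : TStep op κ G R T G' R' T') (h : ¬ Racy X i T) :
    ∃ X', CTStep op κ i X G R T (.ok X' G' R' T') := by
  cases t with
  | const => exact ⟨_, .const⟩
  | binop => exact ⟨_, .binop⟩
  | copy => exact ⟨_, .copy⟩
  | read => exact ⟨_, .read (not_not.mp h)⟩
  | write => exact ⟨_, .write (not_not.mp h).1 (not_not.mp h).2⟩

theorem CTerminates.exists_cStep (h : CTerminates op κ X c Gf Rf) (hs : Step op κ c c') :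
    ∃ X', CStep op κ (.ok X c) (.ok X' c') := by
  cases hs with
  | schd t =>
    obtain ⟨X', ct⟩ := t.exists_ctStep (h.not_racy _)
    exact ⟨X', .schd ct⟩
  | sync hs₁ hs₂ => exact ⟨_, .sync hs₁ hs₂⟩

theorem Terminates.eq_of_cTerminates {G' : Addr → Val} {R' : TID → Reg → Val}
    (h : Terminates op κ c G' R') (hc : CTerminates op κ X c Gf Rf) : G' = Gf ∧ R' = Rf := by
  obtain ⟨P', steps, hfin⟩ := h
  induction steps using Relation.ReflTransGen.head_induction_on generalizing X with
  | refl => exact hc.eq_of_forall_ret hfin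
  | head hs _ ih =>
    obtain ⟨X', hs'⟩ := hc.exists_cStep hs
    exact ih (hc.of_cStep hs')

variable {W : Type} {op' : W → W → W} {κ' : C → W} {φ : Val → W}

def Config.map (φ : Val → W) (c : Config Val C Reg Addr TID) : Config W C Reg Addr TID :=
  ⟨φ ∘ c.G, fun i => φ ∘ c.R i, c.P⟩

theorem CTStep.map (hop : ∀ a b, φ (op a b) = op' (φ a) (φ b)) (hκ : ∀ c, φ (κ c) = κ' c)
    (h : CTStep op κ i X G R T (.ok X' G' R' T')) :
    CTStep op' κ' i X (φ ∘ G) (φ ∘ R) T (.ok X' (φ ∘ G') (φ ∘ R') T') := by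
  cases h with
  | const => rw [Function.comp_update, hκ]; exact .const
  | binop => rw [Function.comp_update, hop]; exact .binop
  | copy => rw [Function.comp_update]; exact .copy
  | read hw => rw [Function.comp_update]; exact .read hw
  | write hr hw => rw [Function.comp_update]; exact .write hr hw

theorem CStep.map (hop : ∀ a b, φ (op a b) = op' (φ a) (φ b)) (hκ : ∀ c, φ (κ c) = κ' c)
    (h : CStep op κ (.ok X c) (.ok X' c')) :
    CStep op' κ' (.ok X (c.map φ)) (.ok X' (c'.map φ)) := by
  cases h with
  | @schd _ _ i _ _ R' _ ct =>
    have hR : (fun k => φ ∘ Function.update c.R i R' k) =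
        Function.update (fun k => φ ∘ c.R k) i (φ ∘ R') :=
      funext (Function.apply_update (fun _ => (φ ∘ ·)) c.R i R')
    simp only [Config.map, hR]
    exact .schd (ct.map hop hκ)
  | sync hs₁ hs₂ => exact .sync hs₁ hs₂

theorem CTerminates.map (hop : ∀ a b, φ (op a b) = op' (φ a) (φ b)) (hκ : ∀ c, φ (κ c) = κ' c)
    (h : CTerminates op κ X c Gf Rf) :
    CTerminates op' κ' X (c.map φ) (φ ∘ Gf) (fun i => φ ∘ Rf i) := by
  refine h.head_induction_on (fun X P hP => ⟨X, P, .refl, hP⟩) ?_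
  intro X c X' c' hs _ ⟨Xf, Pf, run, hfin⟩
  exact ⟨Xf, Pf, .head (hs.map hop hκ) run, hfin⟩

end Dynamics

/-- **Completeness of Equivalence Checking**: for all programs `P, Q` and
symbolic contexts `G, R` over `𝕍`, if `(X_∅, G, R, P) ↪↓ (G_P, R_P)`,
`(X_∅, G, R, Q) ↪↓ (G_Q, R_Q)`, and the symbolic outputs differ, then,
assuming that for all distinct `a, b ∈ 𝕍` there is a map `φ : (𝕍, ⊕) → (ℝ, ⊕)`
with `φ(a) ≠ φ(b)`, there exists a map `φ` such that whenever
`(φ(G), φ(R), P) ↓ (G_P', R_P')` and `(φ(G), φ(R), Q) ↓ (G_Q', R_Q')`, one has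
`G_P' ≠ G_Q'` or `R_P' ≠ R_Q'`. -/
theorem completeness_of_equivalence_checking
    {V C Reg Addr TID : Type} [DecidableEq Reg] [DecidableEq Addr] [DecidableEq TID]
    (opV : V → V → V) (κV : C → V) (opR : ℝ → ℝ → ℝ) (κR : C → ℝ)
    (t₀ : TID)
    (G : Addr → V) (R : TID → Reg → V)
    (P Q : TID → ThreadProg C Reg Addr TID)
    (hsep : ∀ a b : V, a ≠ b → ∃ φ : V → ℝ,
      (∀ v₁ v₂ : V, φ (opV v₁ v₂) = opR (φ v₁) (φ v₂)) ∧
      (∀ c : C, φ (κV c) = κR c) ∧ φ a ≠ φ b)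
    (G_P G_Q : Addr → V) (R_P R_Q : TID → Reg → V)
    (hP : CTerminates opV κV (emptyMemEvs t₀) ⟨G, R, P⟩ G_P R_P)
    (hQ : CTerminates opV κV (emptyMemEvs t₀) ⟨G, R, Q⟩ G_Q R_Q)
    (hne : G_P ≠ G_Q ∨ R_P ≠ R_Q) :
    ∃ φ : V → ℝ,
      (∀ v₁ v₂ : V, φ (opV v₁ v₂) = opR (φ v₁) (φ v₂)) ∧
      (∀ c : C, φ (κV c) = κR c) ∧
      ∀ (G_P' G_Q' : Addr → ℝ) (R_P' R_Q' : TID → Reg → ℝ),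
        Terminates opR κR ⟨fun g => φ (G g), fun i r => φ (R i r), P⟩ G_P' R_P' →
        Terminates opR κR ⟨fun g => φ (G g), fun i r => φ (R i r), Q⟩ G_Q' R_Q' →
        (G_P' ≠ G_Q' ∨ R_P' ≠ R_Q') := by
  obtain ⟨φ, hop, hκ, hφ⟩ : ∃ φ : V → ℝ, (∀ v₁ v₂, φ (opV v₁ v₂) = opR (φ v₁) (φ v₂)) ∧
      (∀ c, φ (κV c) = κR c) ∧
      (φ ∘ G_P ≠ φ ∘ G_Q ∨ (fun i => φ ∘ R_P i) ≠ fun i => φ ∘ R_Q i) := by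
    rcases hne with hG | hR
    · obtain ⟨g, hg⟩ := Function.ne_iff.mp hG
      obtain ⟨φ, hop, hκ, hφ⟩ := hsep _ _ hg
      exact ⟨φ, hop, hκ, .inl fun h => hφ (congrFun h g)⟩
    · obtain ⟨i, hi⟩ := Function.ne_iff.mp hR
      obtain ⟨r, hr⟩ := Function.ne_iff.mp hi
      obtain ⟨φ, hop, hκ, hφ⟩ := hsep _ _ hr
      exact ⟨φ, hop, hκ, .inr fun h => hφ (congrFun (congrFun h i) r)⟩
  refine ⟨φ, hop, hκ, fun G_P' G_Q' R_P' R_Q' hP' hQ' => ?_⟩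
  obtain ⟨rfl, rfl⟩ := hP'.eq_of_cTerminates (hP.map hop hκ)
  obtain ⟨rfl, rfl⟩ := hQ'.eq_of_cTerminates (hQ.map hop hκ)
  exact hφ

end Volta
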